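/- arXiv:2408.08725 — 2 statements merged into one kernel-verified Lean document; each statement's English description precedes it below -/
import Mathlib

section
/- Mellin transform of the scaled cosine: for real a > 0 and real s with 0 < s < 1, the improper integral ∫₀^∞ x^{s-1} cos(a·x) dx converges and equals a^{-s} · Γ(s) · cos(π s / 2). -/
/-!
Write `x ^ (s - 1) = Γ(1 - s)⁻¹ ∫₀^∞ t ^ (-s) e^(-x t) dt`. On `[0, T] × (0, ∞)` the double
integral converges absolutely, so Fubini turns the truncated integral into
`Γ(1 - s)⁻¹ ∫₀^∞ t ^ (-s) L_T(t) dt` with `L_T(t) = ∫₀^T e^(-t x) cos(a x) dx`. This Laplace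
integral is explicit and bounded by `(2t + a) / (t² + a²)` uniformly in `T`, so dominated
convergence lets `T → ∞` and leaves `Γ(1 - s)⁻¹ ∫₀^∞ t ^ (1 - s) / (t² + a²) dt`. Writing
`1 / (t² + a²) = ∫₀^∞ e^(-w (t² + a²)) dw` and using Fubini once more, this integral is
`a ^ (-s) Γ(1 - s/2) Γ(s/2) / 2`; the reflection formula, applied at `s` and at `s / 2`,
turns it into the claimed value.
-/

open Filter Topology MeasureTheory Real Set Asymptotics

lemma integrableOn_rpow_mul_exp_neg_mul {p r : ℝ} (hp : -1 < p) (hr : 0 < r) :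
    IntegrableOn (fun t : ℝ => t ^ p * exp (-(r * t))) (Ioi 0) := by
  simpa [rpow_one] using integrableOn_rpow_mul_exp_neg_mul_rpow hp one_pos hr

lemma integral_rpow_neg_mul_exp_neg_mul {s x : ℝ} (hs : s < 1) (hx : 0 < x) :
    ∫ t in Ioi (0 : ℝ), t ^ (-s) * exp (-(x * t)) = Gamma (1 - s) * x ^ (s - 1) := by
  have h := integral_rpow_mul_exp_neg_mul_Ioi (sub_pos.2 hs) hx
  rw [sub_sub_cancel_left, one_div, inv_rpow hx.le, ← rpow_neg hx.le, neg_sub] at h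
  rw [h, mul_comm]

lemma setIntegral_rpow_mul_eq_integral_laplace {s : ℝ} (hs : s < 1) {S : Set ℝ}
    (hS : MeasurableSet S) (hS0 : S ⊆ Ioi 0) {g : ℝ → ℝ} (hg : Measurable g)
    (hgS : IntegrableOn (fun x => x ^ (s - 1) * g x) S) :
    ∫ x in S, x ^ (s - 1) * g x =
      (Gamma (1 - s))⁻¹ * ∫ t in Ioi (0 : ℝ), t ^ (-s) * ∫ x in S, exp (-(t * x)) * g x := by
  have hG : Gamma (1 - s) ≠ 0 := (Gamma_pos_of_pos (sub_pos.2 hs)).ne'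
  set F : ℝ → ℝ → ℝ := fun x t => t ^ (-s) * exp (-(x * t)) * g x
  have hslice {x : ℝ} (hx : x ∈ S) (c : ℝ) : ∫ t in Ioi (0 : ℝ), t ^ (-s) * exp (-(x * t)) * c =
      Gamma (1 - s) * (x ^ (s - 1) * c) := by
    rw [integral_mul_const, integral_rpow_neg_mul_exp_neg_mul hs (hS0 hx), mul_assoc]
  have hF :
      Integrable (Function.uncurry F) ((volume.restrict S).prod (volume.restrict (Ioi 0))) := by
    have hmeas : AEStronglyMeasurable (Function.uncurry F)
        ((volume.restrict S).prod (volume.restrict (Ioi 0))) :=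
      (by fun_prop : Measurable (Function.uncurry F)).aestronglyMeasurable
    refine (integrable_prod_iff hmeas).2 ⟨?_, ?_⟩
    · filter_upwards [ae_restrict_mem hS] with x hx
      exact (integrableOn_rpow_mul_exp_neg_mul (p := -s) (by linarith) (hS0 hx)).mul_const (g x)
    · refine (hgS.norm.const_mul (Gamma (1 - s))).congr ?_
      filter_upwards [ae_restrict_mem hS] with x hx
      have hx0 : 0 < x := hS0 hx
      rw [norm_mul, norm_of_nonneg (rpow_pos_of_pos hx0 _).le, ← hslice hx, norm_eq_abs]
      refine setIntegral_congr_fun measurableSet_Ioi fun t (ht : 0 < t) => ?_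
      rw [Function.uncurry_apply_pair, norm_mul, norm_mul,
        norm_of_nonneg (rpow_pos_of_pos ht _).le, norm_of_nonneg (exp_pos _).le, norm_eq_abs]
  calc ∫ x in S, x ^ (s - 1) * g x
      = (Gamma (1 - s))⁻¹ * ∫ x in S, ∫ t in Ioi (0 : ℝ), F x t := by
        rw [← integral_const_mul]
        refine setIntegral_congr_fun hS fun x hx => ?_
        rw [hslice hx, inv_mul_cancel_left₀ hG]
    _ = (Gamma (1 - s))⁻¹ * ∫ t in Ioi (0 : ℝ), ∫ x in S, F x t := by
        rw [integral_integral_swap hF]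
    _ = _ := by
        congr 1
        refine setIntegral_congr_fun measurableSet_Ioi fun t ht => ?_
        rw [← integral_const_mul]
        refine integral_congr_ae (ae_of_all _ fun x => ?_)
        simp only [F, mul_comm x t, mul_assoc]

lemma hasDerivAt_exp_neg_mul_mul_sin_sub_cos (t a x : ℝ) :
    HasDerivAt (fun x => exp (-(t * x)) * (a * sin (a * x) - t * cos (a * x)))
      ((t ^ 2 + a ^ 2) * (exp (-(t * x)) * cos (a * x))) x := by
  have hlin (c : ℝ) : HasDerivAt (fun x => c * x) c x := by
    simpa using (hasDerivAt_id x).const_mul c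
  refine ((hlin t).neg.exp.mul (((hlin a).sin.const_mul a).sub
    ((hlin a).cos.const_mul t))).congr_deriv ?_
  simp only [Pi.neg_apply, Pi.sub_apply]
  ring

lemma integral_exp_neg_mul_mul_cos {t a : ℝ} (h : t ^ 2 + a ^ 2 ≠ 0) (T : ℝ) :
    ∫ x in (0 : ℝ)..T, exp (-(t * x)) * cos (a * x) =
      (t + exp (-(t * T)) * (a * sin (a * T) - t * cos (a * T))) / (t ^ 2 + a ^ 2) := by
  rw [intervalIntegral.integral_eq_sub_of_hasDerivAt
      (f := fun x => exp (-(t * x)) * (a * sin (a * x) - t * cos (a * x)) / (t ^ 2 + a ^ 2))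
      (fun x _ => by
        have := (hasDerivAt_exp_neg_mul_mul_sin_sub_cos t a x).div_const (t ^ 2 + a ^ 2)
        rwa [mul_div_cancel_left₀ _ h] at this)
    (by apply Continuous.intervalIntegrable; fun_prop)]
  simp only [mul_zero, neg_zero, exp_zero, sin_zero, cos_zero]
  ring

lemma abs_mul_sin_sub_mul_cos_le (a t y : ℝ) : |a * sin y - t * cos y| ≤ |a| + |t| := by
  calc |a * sin y - t * cos y| ≤ |a * sin y| + |t * cos y| := abs_sub _ _
    _ ≤ |a| * 1 + |t| * 1 := by
        rw [abs_mul, abs_mul]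
        gcongr
        exacts [abs_sin_le_one y, abs_cos_le_one y]
    _ = |a| + |t| := by ring

lemma abs_integral_exp_neg_mul_mul_cos_le {t a T : ℝ} (ht : 0 < t) (ha : 0 < a) (hT : 0 ≤ T) :
    |∫ x in (0 : ℝ)..T, exp (-(t * x)) * cos (a * x)| ≤ (2 * t + a) / (t ^ 2 + a ^ 2) := by
  have hden : 0 < t ^ 2 + a ^ 2 := by positivity
  rw [integral_exp_neg_mul_mul_cos hden.ne', abs_div, abs_of_pos hden]
  gcongr
  have hexp : exp (-(t * T)) ≤ 1 := exp_le_one_iff.2 (by nlinarith)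
  calc |t + exp (-(t * T)) * (a * sin (a * T) - t * cos (a * T))|
      ≤ |t| + exp (-(t * T)) * |a * sin (a * T) - t * cos (a * T)| :=
        (abs_add_le _ _).trans_eq (by rw [abs_mul, abs_of_pos (exp_pos _)])
    _ ≤ t + 1 * (a + t) := by
        rw [abs_of_pos ht]
        gcongr
        simpa [abs_of_pos ha, abs_of_pos ht] using abs_mul_sin_sub_mul_cos_le a t (a * T)
    _ = 2 * t + a := by ring

lemma tendsto_integral_exp_neg_mul_mul_cos {t : ℝ} (ht : 0 < t) (a : ℝ) :
    Tendsto (fun T => ∫ x in (0 : ℝ)..T, exp (-(t * x)) * cos (a * x)) atTop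
      (𝓝 (t / (t ^ 2 + a ^ 2))) := by
  have hden : t ^ 2 + a ^ 2 ≠ 0 := by positivity
  have hexp : Tendsto (fun T => exp (-(t * T))) atTop (𝓝 0) :=
    tendsto_exp_atBot.comp (tendsto_neg_atTop_atBot.comp (tendsto_id.const_mul_atTop ht))
  have hdecay : Tendsto (fun T => exp (-(t * T)) * (a * sin (a * T) - t * cos (a * T)))
      atTop (𝓝 0) := by
    refine squeeze_zero_norm (fun T => ?_) (by simpa using hexp.mul_const (|a| + |t|))
    rw [norm_mul, norm_of_nonneg (exp_pos _).le, norm_eq_abs]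
    gcongr
    exact abs_mul_sin_sub_mul_cos_le a t (a * T)
  simp_rw [integral_exp_neg_mul_mul_cos hden]
  simpa using (hdecay.const_add t).div_const (t ^ 2 + a ^ 2)

lemma integrableOn_rpow_neg_mul_two_mul_add_div_sq_add_sq {s a : ℝ} (hs0 : 0 < s) (hs1 : s < 1)
    (ha : 0 < a) :
    IntegrableOn (fun t : ℝ => t ^ (-s) * ((2 * t + a) / (t ^ 2 + a ^ 2))) (Ioi 0) := by
  set f : ℝ → ℝ := fun t => (2 * t + a) / (t ^ 2 + a ^ 2)
  have hf : Continuous f :=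
    Continuous.div (by fun_prop) (by fun_prop) fun t => by positivity
  have htop : f =O[atTop] (· ^ (-1 : ℝ)) := by
    refine IsBigO.of_bound 3 ?_
    filter_upwards [eventually_ge_atTop a] with t hta
    have ht : 0 < t := ha.trans_le hta
    rw [norm_of_nonneg (by positivity), norm_of_nonneg (by positivity), rpow_neg_one,
      ← div_eq_mul_inv, div_le_div_iff₀ (by positivity) ht]
    nlinarith
  have hbot : f =O[𝓝[>] 0] (· ^ (-0 : ℝ)) := by
    simpa only [neg_zero, rpow_zero] using
      ((hf.tendsto 0).mono_left nhdsWithin_le_nhds).isBigO_one ℝ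
  simpa only [sub_sub_cancel_left] using mellin_convergent_of_isBigO_scalar
    (hf.locallyIntegrable.locallyIntegrableOn _) htop (by linarith : 1 - s < 1) hbot
    (by linarith : 0 < 1 - s)

lemma tendsto_integral_rpow_neg_mul_integral_exp_neg_mul_mul_cos {s a : ℝ} (hs0 : 0 < s)
    (hs1 : s < 1) (ha : 0 < a) :
    Tendsto
      (fun T => ∫ t in Ioi (0 : ℝ), t ^ (-s) * ∫ x in (0 : ℝ)..T, exp (-(t * x)) * cos (a * x))
      atTop (𝓝 (∫ t in Ioi (0 : ℝ), t ^ (-s) * (t / (t ^ 2 + a ^ 2)))) := by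
  have hmeas (T : ℝ) :
      Measurable fun t : ℝ => t ^ (-s) * ∫ x in (0 : ℝ)..T, exp (-(t * x)) * cos (a * x) :=
    (measurable_id.pow_const _).mul (by fun_prop : Continuous _).measurable
  refine tendsto_integral_filter_of_dominated_convergence _
    (Eventually.of_forall fun T => (hmeas T).aestronglyMeasurable) ?_
    (integrableOn_rpow_neg_mul_two_mul_add_div_sq_add_sq hs0 hs1 ha) ?_
  · filter_upwards [eventually_ge_atTop 0] with T hT
    filter_upwards [ae_restrict_mem measurableSet_Ioi] with t (ht : 0 < t)
    rw [norm_mul, norm_of_nonneg (rpow_pos_of_pos ht _).le, norm_eq_abs]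
    gcongr
    exact abs_integral_exp_neg_mul_mul_cos_le ht ha hT
  · filter_upwards [ae_restrict_mem measurableSet_Ioi] with t (ht : 0 < t)
    exact (tendsto_integral_exp_neg_mul_mul_cos ht a).const_mul _

lemma integral_rpow_neg_mul_div_sq_add_sq {s a : ℝ} (hs0 : 0 < s) (hs1 : s < 1) (ha : 0 < a) :
    ∫ t in Ioi (0 : ℝ), t ^ (-s) * (t / (t ^ 2 + a ^ 2)) =
      a ^ (-s) * (Gamma (1 - s / 2) * Gamma (s / 2)) / 2 := by
  set F : ℝ → ℝ → ℝ := fun t w => t ^ (1 - s) * exp (-w * t ^ (2 : ℝ)) * exp (-(a ^ 2 * w))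
  have hq : -1 < 1 - s := by linarith
  have hslice_t {w : ℝ} (hw : 0 < w) : ∫ t in Ioi (0 : ℝ), F t w =
      Gamma (1 - s / 2) / 2 * (w ^ (s / 2 - 1) * exp (-(a ^ 2 * w))) := by
    rw [integral_mul_const, integral_rpow_mul_exp_neg_mul_rpow two_pos hq hw,
      show (1 - s + 1) / 2 = 1 - s / 2 by ring, show -(1 - s + 1) / 2 = s / 2 - 1 by ring]
    ring
  have hslice_w {t : ℝ} (ht : 0 < t) :
      ∫ w in Ioi (0 : ℝ), F t w = t ^ (-s) * (t / (t ^ 2 + a ^ 2)) := by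
    have hr : 0 < t ^ 2 + a ^ 2 := by positivity
    have h := integral_exp_mul_Ioi (neg_neg_of_pos hr) 0
    rw [mul_zero, exp_zero] at h
    have hF (w : ℝ) : F t w = t ^ (1 - s) * exp (-(t ^ 2 + a ^ 2) * w) := by
      simp only [F, mul_assoc, ← exp_add, rpow_two]
      ring_nf
    simp_rw [hF, integral_const_mul, h, rpow_sub ht, rpow_neg ht.le, rpow_one]
    field_simp
  have hF : Integrable (Function.uncurry F)
      ((volume.restrict (Ioi 0)).prod (volume.restrict (Ioi 0))) := by
    have hmeas : AEStronglyMeasurable (Function.uncurry F)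
        ((volume.restrict (Ioi 0)).prod (volume.restrict (Ioi 0))) :=
      (by fun_prop : Measurable (Function.uncurry F)).aestronglyMeasurable
    refine (integrable_prod_iff' hmeas).2 ⟨?_, ?_⟩
    · filter_upwards [ae_restrict_mem measurableSet_Ioi] with w (hw : 0 < w)
      exact (integrableOn_rpow_mul_exp_neg_mul_rpow hq two_pos hw).mul_const (exp (-(a ^ 2 * w)))
    · refine ((integrableOn_rpow_mul_exp_neg_mul (p := s / 2 - 1) (by linarith)
        (by positivity : 0 < a ^ 2)).const_mul (Gamma (1 - s / 2) / 2)).congr ?_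
      filter_upwards [ae_restrict_mem measurableSet_Ioi] with w (hw : 0 < w)
      rw [← hslice_t hw]
      refine setIntegral_congr_fun measurableSet_Ioi fun t (ht : 0 < t) => ?_
      exact (norm_of_nonneg (by positivity)).symm
  calc ∫ t in Ioi (0 : ℝ), t ^ (-s) * (t / (t ^ 2 + a ^ 2))
      = ∫ t in Ioi (0 : ℝ), ∫ w in Ioi (0 : ℝ), F t w :=
        setIntegral_congr_fun measurableSet_Ioi fun t ht => (hslice_w ht).symm
    _ = ∫ w in Ioi (0 : ℝ), ∫ t in Ioi (0 : ℝ), F t w := integral_integral_swap hF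
    _ = ∫ w in Ioi (0 : ℝ), Gamma (1 - s / 2) / 2 * (w ^ (s / 2 - 1) * exp (-(a ^ 2 * w))) :=
        setIntegral_congr_fun measurableSet_Ioi fun w hw => hslice_t hw
    _ = a ^ (-s) * (Gamma (1 - s / 2) * Gamma (s / 2)) / 2 := by
        rw [integral_const_mul, integral_rpow_mul_exp_neg_mul_Ioi (by linarith) (by positivity)]
        have hpow : (1 / a ^ 2) ^ (s / 2) = a ^ (-s) := by
          rw [one_div, inv_rpow (by positivity), ← rpow_two, ← rpow_mul ha.le, rpow_neg ha.le,
            mul_div_cancel₀ s two_ne_zero]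
        rw [hpow]
        ring

lemma Gamma_one_sub_half_mul_Gamma_half {s : ℝ} (hs : sin (π * s) ≠ 0) :
    Gamma (1 - s / 2) * Gamma (s / 2) = 2 * Gamma (1 - s) * Gamma s * cos (π * s / 2) := by
  have hdouble : sin (π * s) = 2 * sin (π * s / 2) * cos (π * s / 2) := by
    rw [← sin_two_mul]; ring_nf
  have hsin : sin (π * s / 2) ≠ 0 := fun h => hs (by rw [hdouble, h]; ring)
  have hcos : cos (π * s / 2) ≠ 0 := fun h => hs (by rw [hdouble, h]; ring)
  rw [mul_comm (Gamma (1 - s / 2)), Gamma_mul_Gamma_one_sub, mul_assoc 2,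
    mul_comm (Gamma (1 - s)), Gamma_mul_Gamma_one_sub, hdouble, mul_div_assoc]
  field_simp

theorem mellin_cos (a s : ℝ) (ha : 0 < a) (hs0 : 0 < s) (hs1 : s < 1) :
    Tendsto (fun T : ℝ => ∫ x in (0 : ℝ)..T, x ^ (s - 1) * Real.cos (a * x)) atTop
      (𝓝 (a ^ (-s) * Real.Gamma s * Real.cos (Real.pi * s / 2))) := by
  have hG : Gamma (1 - s) ≠ 0 := (Gamma_pos_of_pos (sub_pos.2 hs1)).ne'
  have hlaplace (T : ℝ) (hT : 0 ≤ T) : ∫ x in (0 : ℝ)..T, x ^ (s - 1) * cos (a * x) =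
      (Gamma (1 - s))⁻¹ *
        ∫ t in Ioi (0 : ℝ), t ^ (-s) * ∫ x in (0 : ℝ)..T, exp (-(t * x)) * cos (a * x) := by
    simp only [intervalIntegral.integral_of_le hT]
    exact setIntegral_rpow_mul_eq_integral_laplace hs1 measurableSet_Ioc Ioc_subset_Ioi_self
      (by fun_prop) ((intervalIntegral.intervalIntegrable_rpow' (by linarith)).mul_continuousOn
        (by fun_prop)).1
  have hvalue : (Gamma (1 - s))⁻¹ * (a ^ (-s) * (Gamma (1 - s / 2) * Gamma (s / 2)) / 2) =
      a ^ (-s) * Gamma s * cos (π * s / 2) := by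
    rw [Gamma_one_sub_half_mul_Gamma_half (sin_pos_of_pos_of_lt_pi (by positivity)
      (by nlinarith [pi_pos])).ne']
    field_simp
  rw [← hvalue, ← integral_rpow_neg_mul_div_sq_add_sq hs0 hs1 ha]
  refine ((tendsto_integral_rpow_neg_mul_integral_exp_neg_mul_mul_cos hs0 hs1 ha).const_mul
    _).congr' ?_
  filter_upwards [eventually_ge_atTop 0] with T hT
  exact (hlaplace T hT).symm
end

section
/- For real s with 0 < s < 1, ∫₀^∞ x^{s-1} e^{x} Γ(0, x) dx = (π / sin(π s)) · Γ(s), where Γ(0,x) = ∫_x^∞ e^{-t}/t dt is the incomplete Gamma function. -/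
/-!
For `x > 0` the substitution `t = x (1 + w)` turns `eˣ Γ(0,x)` into the Laplace transform
of `w ↦ 1 / (1 + w)`. By Fubini and `∫₀^∞ x^(s-1) e^(-xw) dx = Γ(s) w^(-s)`, the Mellin
transform at `s` of the Laplace transform of `g` is `Γ(s)` times the Mellin transform of `g`
at `1 - s`. Since `1 / (1 + y)` is itself the Laplace transform of `e^(-b)`, the same identity
evaluates the beta integral `∫₀^∞ y^(a-1) / (1 + y) dy = Γ(a) Γ(1 - a)`; Euler's reflection
formula finishes.
-/

open MeasureTheory Set

/-- The upper incomplete Gamma function at parameter `0`: `Γ(0,x) = ∫_x^∞ e^{-t}/t dt`. -/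
noncomputable def incGamma0 (x : ℝ) : ℝ := ∫ t in Ioi x, Real.exp (-t) / t

open Real

theorem integral_comp_add_left_Ioi {E : Type*} [NormedAddCommGroup E] [NormedSpace ℝ E]
    (g : ℝ → E) (a c : ℝ) : ∫ x in Ioi a, g (c + x) = ∫ x in Ioi (c + a), g x := by
  have hpre : (c + ·) ⁻¹' Ioi (c + a) = Ioi a := by ext x; simp
  rw [← hpre, (measurePreserving_add_left volume c).setIntegral_preimage_emb
    (measurableEmbedding_addLeft c)]

noncomputable def laplace (g : ℝ → ℝ) (x : ℝ) : ℝ := ∫ w in Ioi 0, exp (-(x * w)) * g w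

theorem integral_rpow_mul_exp_neg_mul_right_Ioi {s w : ℝ} (hs : 0 < s) (hw : 0 < w) :
    ∫ x in Ioi 0, x ^ (s - 1) * exp (-(x * w)) = Gamma s * w ^ (-s) := by
  simp_rw [mul_comm _ w]
  rw [integral_rpow_mul_exp_neg_mul_Ioi hs hw, one_div, inv_rpow hw.le, rpow_neg hw.le, mul_comm]

theorem integrable_rpow_mul_exp_neg_mul_mul {s : ℝ} (hs : 0 < s) {g : ℝ → ℝ}
    (hg : IntegrableOn (fun w => w ^ (-s) * g w) (Ioi 0)) :
    Integrable (fun p : ℝ × ℝ => p.1 ^ (s - 1) * exp (-(p.1 * p.2)) * g p.2)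
      ((volume.restrict (Ioi 0)).prod (volume.restrict (Ioi 0))) := by
  have hg_meas : AEStronglyMeasurable g (volume.restrict (Ioi 0)) := by
    refine ((measurable_id.pow_const s).aestronglyMeasurable.mul hg.aestronglyMeasurable).congr ?_
    filter_upwards [ae_restrict_mem measurableSet_Ioi] with w (hw : 0 < w)
    simp only [id, Pi.mul_apply]
    rw [← mul_assoc, ← rpow_add hw, add_neg_cancel, rpow_zero, one_mul]
  have hkernel : Measurable fun p : ℝ × ℝ => p.1 ^ (s - 1) * exp (-(p.1 * p.2)) := by fun_prop
  refine (integrable_prod_iff' (hkernel.aestronglyMeasurable.mul hg_meas.comp_snd)).2 ⟨?_, ?_⟩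
  · filter_upwards [ae_restrict_mem measurableSet_Ioi] with w (hw : 0 < w)
    refine Integrable.mul_const (Integrable.of_integral_ne_zero ?_) (g w)
    rw [integral_rpow_mul_exp_neg_mul_right_Ioi hs hw]
    exact mul_ne_zero (Gamma_pos_of_pos hs).ne' (rpow_pos_of_pos hw _).ne'
  · refine (hg.norm.const_mul (Gamma s)).congr ?_
    filter_upwards [ae_restrict_mem measurableSet_Ioi] with w (hw : 0 < w)
    calc Gamma s * ‖w ^ (-s) * g w‖
        = ∫ x in Ioi 0, x ^ (s - 1) * exp (-(x * w)) * ‖g w‖ := by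
          rw [integral_mul_const, integral_rpow_mul_exp_neg_mul_right_Ioi hs hw, norm_mul,
            norm_of_nonneg (rpow_pos_of_pos hw _).le, mul_assoc]
      _ = ∫ x in Ioi 0, ‖x ^ (s - 1) * exp (-(x * w)) * g w‖ :=
          setIntegral_congr_fun measurableSet_Ioi fun x (hx : 0 < x) => by
            simp only [norm_mul, norm_of_nonneg (rpow_pos_of_pos hx _).le,
              norm_of_nonneg (exp_pos _).le]

theorem integral_rpow_mul_laplace {s : ℝ} (hs : 0 < s) {g : ℝ → ℝ}
    (hg : IntegrableOn (fun w => w ^ (-s) * g w) (Ioi 0)) :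
    ∫ x in Ioi 0, x ^ (s - 1) * laplace g x = Gamma s * ∫ w in Ioi 0, w ^ (-s) * g w := by
  calc ∫ x in Ioi 0, x ^ (s - 1) * laplace g x
      = ∫ x in Ioi 0, ∫ w in Ioi 0, x ^ (s - 1) * exp (-(x * w)) * g w := by
        refine setIntegral_congr_fun measurableSet_Ioi fun x _ => ?_
        simp only [laplace, ← integral_const_mul, mul_assoc]
    _ = ∫ w in Ioi 0, ∫ x in Ioi 0, x ^ (s - 1) * exp (-(x * w)) * g w :=
        integral_integral_swap (integrable_rpow_mul_exp_neg_mul_mul hs hg)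
    _ = ∫ w in Ioi 0, Gamma s * (w ^ (-s) * g w) :=
        setIntegral_congr_fun measurableSet_Ioi fun w (hw : 0 < w) => by
          rw [integral_mul_const, integral_rpow_mul_exp_neg_mul_right_Ioi hs hw, mul_assoc]
    _ = Gamma s * ∫ w in Ioi 0, w ^ (-s) * g w := integral_const_mul _ _

theorem laplace_exp_neg {y : ℝ} (hy : -1 < y) : laplace (fun w => exp (-w)) y = (1 + y)⁻¹ := by
  have hy' : -(1 + y) < 0 := by linarith
  calc laplace (fun w => exp (-w)) y = ∫ w in Ioi 0, exp (-(1 + y) * w) := by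
        simp only [laplace, ← exp_add]
        ring_nf
    _ = (1 + y)⁻¹ := by
        rw [integral_exp_mul_Ioi hy', mul_zero, exp_zero, neg_div_neg_eq, one_div]

theorem integral_rpow_div_one_add {a : ℝ} (ha0 : 0 < a) (ha1 : a < 1) :
    ∫ y in Ioi 0, y ^ (a - 1) / (1 + y) = Gamma a * Gamma (1 - a) := by
  have hGamma_integrand (w : ℝ) : exp (-w) * w ^ (1 - a - 1) = w ^ (-a) * exp (-w) := by
    rw [sub_sub_cancel_left, mul_comm]
  have hint : IntegrableOn (fun w => w ^ (-a) * exp (-w)) (Ioi 0) := by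
    simpa only [hGamma_integrand] using GammaIntegral_convergent (sub_pos.2 ha1)
  calc ∫ y in Ioi 0, y ^ (a - 1) / (1 + y)
      = ∫ y in Ioi 0, y ^ (a - 1) * laplace (fun w => exp (-w)) y :=
        setIntegral_congr_fun measurableSet_Ioi fun y (hy : 0 < y) => by
          rw [laplace_exp_neg (by linarith), div_eq_mul_inv]
    _ = Gamma a * Gamma (1 - a) := by
        rw [integral_rpow_mul_laplace ha0 hint, Gamma_eq_integral (sub_pos.2 ha1)]
        simp only [hGamma_integrand]

theorem integrableOn_rpow_div_one_add {a : ℝ} (ha0 : 0 < a) (ha1 : a < 1) :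
    IntegrableOn (fun y : ℝ => y ^ (a - 1) / (1 + y)) (Ioi 0) := by
  refine Integrable.of_integral_ne_zero ?_
  rw [integral_rpow_div_one_add ha0 ha1]
  exact mul_ne_zero (Gamma_pos_of_pos ha0).ne' (Gamma_pos_of_pos (sub_pos.2 ha1)).ne'

theorem exp_mul_incGamma0_eq_laplace {x : ℝ} (hx : 0 < x) :
    exp x * incGamma0 x = laplace (fun w => (1 + w)⁻¹) x := by
  have hsubst : incGamma0 x = x * ∫ w in Ioi 0, exp (-(x + x * w)) / (x + x * w) := by
    rw [incGamma0, ← add_zero x, ← integral_comp_add_left_Ioi, ← mul_zero x,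
      ← integral_comp_mul_left_Ioi' _ _ hx, smul_eq_mul, mul_zero, add_zero]
  rw [hsubst, laplace, ← integral_const_mul, ← integral_const_mul]
  refine setIntegral_congr_fun measurableSet_Ioi fun w (hw : 0 < w) => ?_
  rw [show -(x + x * w) = -x + -(x * w) by ring, exp_add, exp_neg x]
  field_simp

theorem mellin_exp_incGamma (s : ℝ) (hs0 : 0 < s) (hs1 : s < 1) :
    (∫ x in Ioi (0 : ℝ), x ^ (s - 1) * Real.exp x * incGamma0 x) =
      Real.pi / Real.sin (Real.pi * s) * Real.Gamma s := by
  have h1s : 0 < 1 - s := sub_pos.2 hs1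
  have hint := integrableOn_rpow_div_one_add h1s (sub_lt_self 1 hs0)
  have hbeta := integral_rpow_div_one_add h1s (sub_lt_self 1 hs0)
  simp only [sub_sub_cancel_left, sub_sub_cancel, div_eq_mul_inv] at hint hbeta
  calc ∫ x in Ioi 0, x ^ (s - 1) * exp x * incGamma0 x
      = ∫ x in Ioi 0, x ^ (s - 1) * laplace (fun w => (1 + w)⁻¹) x :=
        setIntegral_congr_fun measurableSet_Ioi fun x hx => by
          rw [mul_assoc, exp_mul_incGamma0_eq_laplace hx]
    _ = Gamma s * (Gamma (1 - s) * Gamma s) := by rw [integral_rpow_mul_laplace hs0 hint, hbeta]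
    _ = π / sin (π * s) * Gamma s := by rw [← Gamma_mul_Gamma_one_sub]; ring
end
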